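/- arXiv:2601.09167 — 6 statements merged into one kernel-verified Lean document; each statement's English description precedes it below -/
import Mathlib

section
/- Let X be a finite set with |X| = 3q and let C = {C_1, …, C_t} be a collection of 3-element subsets of X. Let X' = X ∪ {d_1, …, d_q}, where d_1, …, d_q are q distinct new elements not in X, and let C' = {C_i ∪ {d_j} : i ∈ [t], j ∈ [q]} (each a 4-element subset of X'). Then X has an exact 3-cover from C if and only if X' has an exact 4-cover from C'. -/
/-!
An exact 3-cover of `X` has exactly `|X| / 3 = q = |D|` blocks, so its blocks can be matched
bijectively with the new points; adding to each block its partner gives an exact 4-cover of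
`X ∪ D`. Conversely, every block of `C'` meets `X` in a block of `C`, and the traces on `X` of
the blocks of an exact cover of `X ∪ D` partition `X`.
-/

/-- An exact cover of a finite set `X` from a collection `C` of subsets of `X` is a
subcollection of pairwise disjoint sets from `C` whose union is `X`. -/
def HasExactCover {α : Type*} [DecidableEq α] (X : Finset α) (C : Finset (Finset α)) : Prop :=
  ∃ C' ⊆ C, (C' : Set (Finset α)).Pairwise (fun s s' => Disjoint s s') ∧ C'.biUnion id = X

namespace Finset

variable {α : Type*} [DecidableEq α]

theorem card_eq_mul_card_of_pairwiseDisjoint {B : Finset (Finset α)} {k : ℕ}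
    (hB : (B : Set (Finset α)).PairwiseDisjoint id) (hk : ∀ b ∈ B, b.card = k) :
    (B.biUnion id).card = k * B.card :=
  (card_biUnion hB).trans ((sum_const_nat hk).trans (mul_comm _ _))

theorem pairwiseDisjoint_insert {ι : Type*} {s : Set ι} {c : ι → Finset α} {d : ι → α}
    {X : Finset α} (hc : s.PairwiseDisjoint c) (hcX : ∀ i ∈ s, c i ⊆ X)
    (hd : s.InjOn d) (hdX : ∀ i ∈ s, d i ∉ X) :
    s.PairwiseDisjoint fun i => insert (d i) (c i) := by
  intro i hi j hj hij
  simp only [Function.onFun, disjoint_insert_left, disjoint_insert_right, mem_insert, not_or]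
  exact ⟨⟨fun h => hij (hd hi hj h.symm), fun h => hdX j hj (hcX i hi h)⟩,
    fun h => hdX i hi (hcX j hj h), hc hi hj hij⟩

theorem exists_pairwiseDisjoint_biUnion_insert {B : Finset (Finset α)} {D : Finset α}
    (hB : (B : Set (Finset α)).PairwiseDisjoint id) (hBD : Disjoint (B.biUnion id) D)
    (hcard : B.card = D.card) :
    ∃ B' : Finset (Finset α), (∀ b' ∈ B', ∃ b ∈ B, ∃ d ∈ D, b' = insert d b) ∧
      (B' : Set (Finset α)).PairwiseDisjoint id ∧ B'.biUnion id = B.biUnion id ∪ D := by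
  let e : B ≃ D := equivOfCardEq hcard
  let extend : B → Finset α := fun b => insert (e b : α) b
  refine ⟨B.attach.image extend, ?_, ?_, ?_⟩
  · simp only [mem_image, mem_attach, true_and, forall_exists_index, forall_apply_eq_imp_iff]
    exact fun b => ⟨b, b.2, e b, (e b).2, rfl⟩
  · rw [coe_image]
    refine Set.Pairwise.image (pairwiseDisjoint_insert (X := B.biUnion id) ?_ ?_ ?_ ?_)
    · exact fun b _ b' _ hbb' => hB b.2 b'.2 (Subtype.coe_ne_coe.mpr hbb')
    · exact fun b _ => subset_biUnion_of_mem id b.2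
    · exact fun b _ b' _ h => e.injective (Subtype.ext h)
    · exact fun b _ hb => disjoint_left.mp hBD hb (e b).2
  · ext x
    simp only [image_biUnion, mem_biUnion, mem_attach, true_and, id, mem_union, extend,
      mem_insert]
    constructor
    · rintro ⟨b, rfl | hx⟩
      · exact Or.inr (e b).2
      · exact Or.inl ⟨b, b.2, hx⟩
    · rintro (⟨b, hb, hx⟩ | hx)
      · exact ⟨⟨b, hb⟩, Or.inr hx⟩
      · exact ⟨e.symm ⟨x, hx⟩, Or.inl (by rw [e.apply_symm_apply])⟩

theorem pairwiseDisjoint_image_inter {B : Finset (Finset α)} (X : Finset α)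
    (hB : (B : Set (Finset α)).PairwiseDisjoint id) :
    (B.image (· ∩ X) : Set (Finset α)).PairwiseDisjoint id := by
  rw [coe_image]
  exact Set.Pairwise.image (hB.mono' fun _ _ h => h.mono inter_subset_left inter_subset_left)

theorem biUnion_image_inter (B : Finset (Finset α)) (X : Finset α) :
    (B.image (· ∩ X)).biUnion id = B.biUnion id ∩ X := by
  rw [image_biUnion, biUnion_inter]
  rfl

end Finset

open Finset

/-- `X` (with `|X| = 3q`) has an exact 3-cover from `C` iff
`X' = X ∪ D` has an exact 4-cover from `C' = {Cᵢ ∪ {dⱼ}}`, where `D` is a set of `q`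
new elements disjoint from `X`. -/
theorem exact3Cover_iff_exact4Cover {α : Type*} [DecidableEq α] (q : ℕ)
    (X : Finset α) (C : Finset (Finset α)) (D : Finset α)
    (hX : X.card = 3 * q)
    (hC : ∀ c ∈ C, c.card = 3 ∧ c ⊆ X)
    (hD : D.card = q) (hXD : Disjoint X D) :
    HasExactCover X C ↔
      HasExactCover (X ∪ D) ((C ×ˢ D).image fun cd => insert cd.2 cd.1) := by
  constructor
  · rintro ⟨B, hBC, hB, rfl⟩
    have hcard : B.card = D.card := by
      have := card_eq_mul_card_of_pairwiseDisjoint hB fun b hb => (hC b (hBC hb)).1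
      omega
    obtain ⟨B', hB'C, hB', hunion⟩ := exists_pairwiseDisjoint_biUnion_insert hB hXD hcard
    refine ⟨B', fun b' hb' => ?_, hB', hunion⟩
    obtain ⟨b, hb, d, hd, rfl⟩ := hB'C b' hb'
    exact mem_image.mpr ⟨(b, d), mem_product.mpr ⟨hBC hb, hd⟩, rfl⟩
  · rintro ⟨B, hBC, hB, hunion⟩
    refine ⟨B.image (· ∩ X), fun c hc => ?_, pairwiseDisjoint_image_inter X hB, ?_⟩
    · obtain ⟨b, hb, rfl⟩ := mem_image.mp hc
      obtain ⟨⟨c, d⟩, hcd, rfl⟩ := mem_image.mp (hBC hb)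
      obtain ⟨hc, hd⟩ := mem_product.mp hcd
      rwa [insert_inter_of_notMem (disjoint_right.mp hXD hd), inter_eq_left.mpr (hC c hc).2]
    · rw [biUnion_image_inter, hunion, union_inter_cancel_left]
end

section
/- For every 3-regular finite simple graph G, the graph H constructed from G as described satisfies γ_R(H) = 4. -/
/-- A Roman dominating function: labels in {0,1,2} and every vertex labelled 0 has a
neighbour labelled 2. -/
def IsRDF {V : Type*} (G : SimpleGraph V) (f : V → ℕ) : Prop :=
  (∀ v, f v ≤ 2) ∧ ∀ v, f v = 0 → ∃ w, G.Adj v w ∧ f w = 2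

/-- A global Roman dominating function: an RDF for both `G` and its complement. -/
def IsGRDF {V : Type*} (G : SimpleGraph V) (f : V → ℕ) : Prop :=
  IsRDF G f ∧ IsRDF Gᶜ f

/-- The weight of a labelling. -/
def rdfWeight {V : Type*} [Fintype V] (f : V → ℕ) : ℕ := ∑ v, f v

/-- The Roman domination number `γ_R(G)`. -/
noncomputable def romanNumber {V : Type*} [Fintype V] (G : SimpleGraph V) : ℕ :=
  sInf {k | ∃ f, IsRDF G f ∧ rdfWeight f = k}

/-- The global Roman domination number `γ_gR(G)`. -/
noncomputable def globalRomanNumber {V : Type*} [Fintype V] (G : SimpleGraph V) : ℕ :=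
  sInf {k | ∃ f, IsGRDF G f ∧ rdfWeight f = k}

/-- The adjacency relation of the graph `H` built from a (3-regular) graph `G`:
vertices are three copies `u₁,u₂,u₃` of each vertex `u` of `G` together with three
extra vertices `v1,v2,v3` (encoded as `Fin 3`).  Copies `u_i`, `w_j` (u ≠ w) are adjacent
iff `uw` is NOT an edge of `G`; copies of the same vertex are pairwise non-adjacent;
each of `v1,v2,v3` is adjacent to all copies, and `v1,v2,v3` are pairwise non-adjacent. -/
def hAdj {V : Type*} (G : SimpleGraph V) :
    ((V × Fin 3) ⊕ Fin 3) → ((V × Fin 3) ⊕ Fin 3) → Prop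
  | Sum.inl (u, _), Sum.inl (w, _) => u ≠ w ∧ ¬ G.Adj u w
  | Sum.inl _, Sum.inr _ => True
  | Sum.inr _, Sum.inl _ => True
  | Sum.inr _, Sum.inr _ => False

/-- The graph `H` constructed from `G`. -/
def HGraph {V : Type*} (G : SimpleGraph V) : SimpleGraph ((V × Fin 3) ⊕ Fin 3) where
  Adj := hAdj G
  symm := by
    constructor
    rintro (⟨u, i⟩ | i) (⟨w, j⟩ | j) h
    · exact ⟨h.1.symm, fun hadj => h.2 hadj.symm⟩
    · trivial
    · trivial
    · exact h
  loopless := by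
    constructor
    rintro (⟨u, i⟩ | i) h
    · exact h.1 rfl
    · exact h


/-! Labelling `v1` and one copy `u₁` by 2 gives a Roman dominating function of weight 4,
since every copy is adjacent to `v1` and `v1, v2, v3` are adjacent to `u₁`. Conversely, every
vertex of `H` has two distinct non-neighbours (its sibling copies, or the other two of
`v1, v2, v3`). An RDF with two 2's already weighs 4; one with a single 2 must label both
non-neighbours of that vertex by at least 1; one without 2's labels every vertex by at least 1,
and `H` has at least 6 vertices. -/

section

variable {V : Type*} {G : SimpleGraph V} {f : V → ℕ}

lemma isRDF_one (G : SimpleGraph V) : IsRDF G 1 :=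
  ⟨fun _ => by simp, fun _ h => absurd h one_ne_zero⟩

lemma romanNumber_le [Fintype V] (hf : IsRDF G f) : romanNumber G ≤ rdfWeight f :=
  Nat.sInf_le ⟨f, hf, rfl⟩

lemma le_romanNumber [Fintype V] {k : ℕ} (h : ∀ f, IsRDF G f → k ≤ rdfWeight f) :
    k ≤ romanNumber G :=
  le_csInf ⟨_, 1, isRDF_one G, rfl⟩ (by rintro _ ⟨f, hf, rfl⟩; exact h f hf)

lemma romanNumber_le_two_mul_card [Fintype V] {s : Finset V}
    (hs : ∀ v ∉ s, ∃ w ∈ s, G.Adj v w) :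
    romanNumber G ≤ 2 * s.card := by
  classical
  calc romanNumber G ≤ rdfWeight fun v => if v ∈ s then 2 else 0 := by
        refine romanNumber_le ⟨fun v => by dsimp only; split_ifs <;> omega, fun v hv => ?_⟩
        obtain ⟨w, hws, hvw⟩ := hs v fun h => by simp [h] at hv
        exact ⟨w, hvw, if_pos hws⟩
    _ = 2 * s.card := by simp [rdfWeight, Finset.sum_ite_mem, mul_comm]

lemma IsRDF.one_le (hf : IsRDF G f) {v : V} (hv : ∀ w, G.Adj v w → f w ≠ 2) : 1 ≤ f v := by
  by_contra! h0
  obtain ⟨w, hvw, hw⟩ := hf.2 v (by omega)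
  exact hv w hvw hw

lemma add_le_sum_of_ne {s : Finset V} {a b : V} (ha : a ∈ s) (hb : b ∈ s) (hab : a ≠ b) :
    f a + f b ≤ ∑ v ∈ s, f v := by
  classical
  rw [← Finset.sum_pair hab]
  exact Finset.sum_le_sum_of_subset (Finset.insert_subset ha (Finset.singleton_subset_iff.2 hb))

theorem IsRDF.four_le_rdfWeight [Fintype V] (hf : IsRDF G f) (hcard : 4 ≤ Fintype.card V)
    (hnon : ∀ v, ∃ a b, a ≠ b ∧ Gᶜ.Adj v a ∧ Gᶜ.Adj v b) : 4 ≤ rdfWeight f := by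
  classical
  unfold rdfWeight
  by_cases h2 : ∃ s, f s = 2
  · obtain ⟨s, hs⟩ := h2
    by_cases hsecond : ∃ t ≠ s, f t = 2
    · obtain ⟨t, hts, ht⟩ := hsecond
      have := add_le_sum_of_ne (f := f) (Finset.mem_univ t) (Finset.mem_univ s) hts
      omega
    push Not at hsecond
    obtain ⟨a, b, hab, ha, hb⟩ := hnon s
    have hpos : ∀ v, Gᶜ.Adj s v → 1 ≤ f v := fun v hv => hf.one_le fun w hvw hw => by
      have hws : w = s := by by_contra hws; exact hsecond w hws hw
      exact ((SimpleGraph.compl_adj G s v).1 hv).2 (hws ▸ hvw.symm)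
    have hrest : f a + f b ≤ ∑ v ∈ Finset.univ.erase s, f v :=
      add_le_sum_of_ne (Finset.mem_erase.2 ⟨ha.ne.symm, Finset.mem_univ a⟩)
        (Finset.mem_erase.2 ⟨hb.ne.symm, Finset.mem_univ b⟩) hab
    rw [← Finset.add_sum_erase _ _ (Finset.mem_univ s)]
    have := hpos a ha
    have := hpos b hb
    omega
  · push Not at h2
    calc 4 ≤ Fintype.card V := hcard
      _ = ∑ _ : V, 1 := by simp
      _ ≤ ∑ v, f v := Finset.sum_le_sum fun v _ => hf.one_le fun w _ => h2 w

namespace HGraph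

lemma exists_pair_compl_adj (G : SimpleGraph V) (x : (V × Fin 3) ⊕ Fin 3) :
    ∃ a b, a ≠ b ∧ (HGraph G)ᶜ.Adj x a ∧ (HGraph G)ᶜ.Adj x b := by
  have hfin : ∀ i : Fin 3, i + 1 ≠ i + 2 ∧ i ≠ i + 1 ∧ i ≠ i + 2 := by decide
  rcases x with ⟨u, i⟩ | i
  · refine ⟨.inl (u, i + 1), .inl (u, i + 2), ?_⟩
    simp [HGraph, hAdj, hfin i]
  · refine ⟨.inr (i + 1), .inr (i + 2), ?_⟩
    simp [HGraph, hAdj, hfin i]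

lemma four_le_card [Fintype V] [Nonempty V] : 4 ≤ Fintype.card ((V × Fin 3) ⊕ Fin 3) := by
  have := Fintype.card_pos (α := V)
  simp only [Fintype.card_sum, Fintype.card_prod, Fintype.card_fin]
  omega

end HGraph

end

theorem romanNumber_HGraph_eq_four_general {V : Type*} [Fintype V] [Nonempty V]
    (G : SimpleGraph V) :
    romanNumber (HGraph G) = 4 := by
  classical
  obtain ⟨u⟩ := ‹Nonempty V›
  refine le_antisymm ?_ (le_romanNumber fun f hf =>
    hf.four_le_rdfWeight HGraph.four_le_card (HGraph.exists_pair_compl_adj G))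
  have hdom : ∀ x ∉ ({.inr 0, .inl (u, 0)} : Finset _),
      ∃ y ∈ ({.inr 0, .inl (u, 0)} : Finset _), (HGraph G).Adj x y := by
    rintro (_ | _) -
    exacts [⟨.inr 0, by simp, trivial⟩, ⟨.inl (u, 0), by simp, trivial⟩]
  simpa [Finset.card_pair] using romanNumber_le_two_mul_card hdom

/-- for every 3-regular finite simple graph `G`, the graph `H`
constructed from `G` satisfies `γ_R(H) = 4`. -/
theorem romanNumber_HGraph_eq_four {V : Type*} [Fintype V] [DecidableEq V] [Nonempty V]
    (G : SimpleGraph V) [DecidableRel G.Adj]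
    (hreg : ∀ v : V, G.degree v = 3) :
    romanNumber (HGraph G) = 4 :=
  romanNumber_HGraph_eq_four_general G
end

section
/- Let G be a 3-regular finite simple graph and let H be the graph constructed from G as described. If f is a minimum weighted global Roman dominating function of H, then exactly one vertex among v1, v2, v3 is assigned the label 2 by f while the other two are assigned the label 0. -/
/-!
Labelling every first copy `u₁` and `v1` by 2 is a GRDF of `H` of weight `2|V| + 2`. In the
complement of `H` the copies are adjacent only to copies and `v1, v2, v3` only to each other,
so a GRDF restricts to an RDF on each of these two parts. An RDF with no label 2 is constant 1;
hence if no copy were labelled 2, the weight would be at least `3|V| + 2`. Once some copy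
carries a 2, the labels of `v1, v2, v3` may be replaced by `(2, 0, 0)`, so in a minimum GRDF
they sum to at most 2, and an RDF on three vertices of weight at most 2 is `(2, 0, 0)` up to order.
-/

open Finset

namespace IsRDF

variable {V : Type*} {G : SimpleGraph V} {f : V → ℕ}

lemma comap {W : Type*} (hf : IsRDF G f) {φ : W → V}
    (hφ : ∀ w v, G.Adj (φ w) v → v ∈ Set.range φ) : IsRDF (G.comap φ) (f ∘ φ) := by
  refine ⟨fun w => hf.1 (φ w), fun w hw => ?_⟩
  obtain ⟨v, hadj, hv⟩ := hf.2 (φ w) hw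
  obtain ⟨w', rfl⟩ := hφ w v hadj
  exact ⟨w', hadj, hv⟩

lemma eq_one_of_forall_ne_two (hf : IsRDF G f) (h : ∀ v, f v ≠ 2) (v : V) : f v = 1 := by
  have hv0 : f v ≠ 0 := fun hv => by
    obtain ⟨w, -, hw⟩ := hf.2 v hv
    exact h w hw
  have := hf.1 v
  have := h v
  omega

variable [Fintype V]

lemma rdfWeight_eq_card_of_forall_ne_two (hf : IsRDF G f) (h : ∀ v, f v ≠ 2) :
    rdfWeight f = Fintype.card V := by
  simp [rdfWeight, hf.eq_one_of_forall_ne_two h]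

lemma two_le_rdfWeight (hf : IsRDF G f) (hcard : 2 ≤ Fintype.card V) : 2 ≤ rdfWeight f := by
  by_cases h : ∀ v, f v ≠ 2
  · exact hf.rdfWeight_eq_card_of_forall_ne_two h ▸ hcard
  · obtain ⟨v, hv⟩ := not_forall_not.mp h
    exact hv ▸ single_le_sum (fun w _ => Nat.zero_le (f w)) (mem_univ v)

lemma exists_eq_two_of_rdfWeight_le_two (hf : IsRDF G f) (hcard : 3 ≤ Fintype.card V)
    (hweight : rdfWeight f ≤ 2) : ∃ v, f v = 2 ∧ ∀ w, w ≠ v → f w = 0 := by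
  classical
  obtain ⟨v, hv⟩ : ∃ v, f v = 2 := by
    by_contra! h
    have := hf.rdfWeight_eq_card_of_forall_ne_two h
    omega
  have hrest : ∑ w ∈ univ.erase v, f w = 0 := by
    have := add_sum_erase univ f (mem_univ v)
    unfold rdfWeight at hweight
    omega
  exact ⟨v, hv, fun w hw => (sum_eq_zero_iff.mp hrest) w (mem_erase.mpr ⟨hw, mem_univ w⟩)⟩

end IsRDF

lemma globalRomanNumber_le {V : Type*} [Fintype V] {G : SimpleGraph V} {f : V → ℕ}
    (hf : IsGRDF G f) : globalRomanNumber G ≤ rdfWeight f :=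
  Nat.sInf_le ⟨f, hf, rfl⟩

lemma rdfWeight_sum_elim {α β : Type*} [Fintype α] [Fintype β] (g : α → ℕ) (h : β → ℕ) :
    rdfWeight (Sum.elim g h) = rdfWeight g + rdfWeight h :=
  Fintype.sum_sum_type _

lemma rdfWeight_eq_comp_inl_add_comp_inr {α β : Type*} [Fintype α] [Fintype β]
    (f : α ⊕ β → ℕ) : rdfWeight f = rdfWeight (f ∘ Sum.inl) + rdfWeight (f ∘ Sum.inr) := by
  rw [← rdfWeight_sum_elim, Sum.elim_comp_inl_inr]

lemma rdfWeight_single_two {ι : Type*} [Fintype ι] [DecidableEq ι] (i : ι) :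
    rdfWeight (Pi.single i 2 : ι → ℕ) = 2 :=
  Fintype.sum_pi_single' i 2

namespace HGraph

variable {V : Type*} (G : SimpleGraph V)

lemma adj_inl_inr (x : V × Fin 3) (i : Fin 3) : (HGraph G).Adj (Sum.inl x) (Sum.inr i) :=
  trivial

lemma not_compl_adj_inl_inr (x : V × Fin 3) (i : Fin 3) :
    ¬ (HGraph G)ᶜ.Adj (Sum.inl x) (Sum.inr i) :=
  fun h => h.2 (adj_inl_inr G x i)

lemma compl_adj_inr_inr {i j : Fin 3} (h : i ≠ j) : (HGraph G)ᶜ.Adj (Sum.inr i) (Sum.inr j) :=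
  ⟨Sum.inr_injective.ne h, id⟩

lemma compl_adj_inl_inl {u : V} {k l : Fin 3} (h : k ≠ l) :
    (HGraph G)ᶜ.Adj (Sum.inl (u, k)) (Sum.inl (u, l)) :=
  ⟨by simp [h], fun hadj => hadj.1 rfl⟩

variable {G}

lemma _root_.IsGRDF.isRDF_comap_inl {f : (V × Fin 3) ⊕ Fin 3 → ℕ} (hf : IsGRDF (HGraph G) f) :
    IsRDF ((HGraph G)ᶜ.comap Sum.inl) (f ∘ Sum.inl) :=
  hf.2.comap fun x w hadj => by
    cases w with
    | inl y => exact ⟨y, rfl⟩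
    | inr i => exact absurd hadj (not_compl_adj_inl_inr G x i)

lemma _root_.IsGRDF.isRDF_comap_inr {f : (V × Fin 3) ⊕ Fin 3 → ℕ} (hf : IsGRDF (HGraph G) f) :
    IsRDF ((HGraph G)ᶜ.comap Sum.inr) (f ∘ Sum.inr) :=
  hf.2.comap fun i w hadj => by
    cases w with
    | inl x => exact absurd hadj.symm (not_compl_adj_inl_inr G x i)
    | inr j => exact ⟨j, rfl⟩

lemma isGRDF_sum_elim_single {g : V × Fin 3 → ℕ} (hg : IsRDF ((HGraph G)ᶜ.comap Sum.inl) g)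
    (htwo : ∃ x, g x = 2) : IsGRDF (HGraph G) (Sum.elim g (Pi.single (0 : Fin 3) 2)) := by
  obtain ⟨x₀, hx₀⟩ := htwo
  have hbound : ∀ v, Sum.elim g (Pi.single (0 : Fin 3) 2) v ≤ 2 := by
    rintro (x | i)
    · exact hg.1 x
    · by_cases hi : i = 0 <;> simp [hi]
  refine ⟨⟨hbound, ?_⟩, ⟨hbound, ?_⟩⟩
  · rintro (x | i) -
    · exact ⟨Sum.inr 0, adj_inl_inr G x 0, by simp⟩
    · exact ⟨Sum.inl x₀, (adj_inl_inr G x₀ i).symm, hx₀⟩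
  · rintro (x | i) hzero
    · obtain ⟨y, hadj, hy⟩ := hg.2 x hzero
      exact ⟨Sum.inl y, hadj, hy⟩
    · have hi : i ≠ 0 := by rintro rfl; simp at hzero
      exact ⟨Sum.inr 0, compl_adj_inr_inr G hi, by simp⟩

variable (V) in
def firstCopyLabels : V × Fin 3 → ℕ := fun x => (Pi.single 0 2 : Fin 3 → ℕ) x.2

lemma isGRDF_sum_elim_firstCopyLabels [Nonempty V] :
    IsGRDF (HGraph G) (Sum.elim (firstCopyLabels V) (Pi.single (0 : Fin 3) 2)) := by
  refine isGRDF_sum_elim_single ⟨fun x => ?_, fun ⟨u, k⟩ hk => ?_⟩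
    ⟨(Classical.arbitrary V, 0), by simp [firstCopyLabels]⟩
  · by_cases h : x.2 = 0 <;> simp [firstCopyLabels, h]
  · have hk0 : k ≠ 0 := by rintro rfl; simp [firstCopyLabels] at hk
    exact ⟨(u, 0), compl_adj_inl_inl G hk0, by simp [firstCopyLabels]⟩

lemma rdfWeight_firstCopyLabels [Fintype V] :
    rdfWeight (firstCopyLabels V) = 2 * Fintype.card V := by
  simp [rdfWeight, firstCopyLabels, Fintype.sum_prod_type, mul_comm]

end HGraph

theorem HGraph_min_GRDF_special_labels_general {V : Type*} [Fintype V] [Nonempty V]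
    (G : SimpleGraph V)
    (f : ((V × Fin 3) ⊕ Fin 3) → ℕ)
    (hf : IsGRDF (HGraph G) f)
    (hmin : rdfWeight f = globalRomanNumber (HGraph G)) :
    ∃ i : Fin 3, f (Sum.inr i) = 2 ∧ ∀ j : Fin 3, j ≠ i → f (Sum.inr j) = 0 := by
  have hle : ∀ g, IsGRDF (HGraph G) g → rdfWeight f ≤ rdfWeight g :=
    fun g hg => hmin ▸ globalRomanNumber_le hg
  have hcopies := hf.isRDF_comap_inl
  have hspecial := hf.isRDF_comap_inr
  have hcard : 0 < Fintype.card V := Fintype.card_pos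
  obtain ⟨x, hx⟩ : ∃ x, f (Sum.inl x) = 2 := by
    by_contra! hnone
    have hfirst := hle _ (HGraph.isGRDF_sum_elim_firstCopyLabels (G := G))
    have hspecial_two := hspecial.two_le_rdfWeight (by simp)
    rw [rdfWeight_eq_comp_inl_add_comp_inr, hcopies.rdfWeight_eq_card_of_forall_ne_two hnone,
      rdfWeight_sum_elim, HGraph.rdfWeight_firstCopyLabels, rdfWeight_single_two] at hfirst
    simp only [Fintype.card_prod, Fintype.card_fin] at hfirst
    omega
  have hweight : rdfWeight (f ∘ Sum.inr) ≤ 2 := by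
    have := hle _ (HGraph.isGRDF_sum_elim_single hcopies ⟨x, hx⟩)
    rw [rdfWeight_eq_comp_inl_add_comp_inr, rdfWeight_sum_elim, rdfWeight_single_two] at this
    omega
  exact hspecial.exists_eq_two_of_rdfWeight_le_two (by simp) hweight

/-- if `f` is a minimum weighted global Roman dominating function of `H`,
then exactly one of the vertices `v1,v2,v3` gets label 2 and the other two get label 0. -/
theorem HGraph_min_GRDF_special_labels {V : Type*} [Fintype V] [DecidableEq V] [Nonempty V]
    (G : SimpleGraph V) [DecidableRel G.Adj]
    (hreg : ∀ v : V, G.degree v = 3)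
    (f : ((V × Fin 3) ⊕ Fin 3) → ℕ)
    (hf : IsGRDF (HGraph G) f)
    (hmin : rdfWeight f = globalRomanNumber (HGraph G)) :
    ∃ i : Fin 3, f (Sum.inr i) = 2 ∧ ∀ j : Fin 3, j ≠ i → f (Sum.inr j) = 0 :=
  HGraph_min_GRDF_special_labels_general G f hf hmin
end

section
/- Let G be a 3-regular finite simple graph and let H be the graph constructed from G as described. If f is a minimum weighted global Roman dominating function of H, then every vertex of H is assigned a label from {0, 2} by f (no vertex receives label 1). -/
/-! The copies `u₁, u₂, u₃` of a vertex of `G`, and likewise `v1, v2, v3`, are false twins in `H`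
(same `H`-neighbourhood), hence triangles of `Hᶜ`. Relabelling such a triple `2, 0, 0` keeps a
GRDF a GRDF as soon as one of its members has an `H`-neighbour labelled 2, so in a minimum GRDF
such a triple carries weight at most 2 and thus contains a 0.

Comparing with the GRDF that labels 2 exactly `v1` and the first copy of every vertex (weight
`2|V| + 2 < 3|V| + 3`), some label is 2; the triple argument then gives a 2 among the copies and
a 2 among `v1, v2, v3`, so every vertex has an `H`-neighbour labelled 2. A vertex `z` labelled 1
therefore has no `Hᶜ`-neighbour labelled 2 (otherwise relabel it 0), and then no false twin of `z`
can be labelled 0, contradicting the triple argument. -/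

open Finset

section FalseTwins

variable {X : Type*} {H : SimpleGraph X} {S : Finset X} {s t x : X}

def IsFalseTwinSet (H : SimpleGraph X) (S : Finset X) : Prop :=
  ∀ s ∈ S, ∀ t ∈ S, H.neighborSet s = H.neighborSet t

theorem IsFalseTwinSet.adj (hS : IsFalseTwinSet H S) (hs : s ∈ S) (ht : t ∈ S)
    (h : H.Adj s x) : H.Adj t x :=
  show x ∈ H.neighborSet t from hS s hs t ht ▸ h

theorem IsFalseTwinSet.not_adj (hS : IsFalseTwinSet H S) (hs : s ∈ S) (ht : t ∈ S) :
    ¬H.Adj s t :=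
  fun h => H.irrefl (hS.adj hs ht h)

theorem IsFalseTwinSet.compl_adj (hS : IsFalseTwinSet H S) (hs : s ∈ S) (ht : t ∈ S)
    (hst : s ≠ t) : Hᶜ.Adj s t :=
  (SimpleGraph.compl_adj H s t).2 ⟨hst, hS.not_adj hs ht⟩

theorem IsFalseTwinSet.compl_adj_of_compl_adj (hS : IsFalseTwinSet H S) (hs : s ∈ S)
    (ht : t ∈ S) (h : Hᶜ.Adj s x) (hxt : t ≠ x) : Hᶜ.Adj t x :=
  (SimpleGraph.compl_adj H t x).2 ⟨hxt, fun hadj => h.2 (hS.adj ht hs hadj)⟩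

end FalseTwins

section Relabelling

variable {X : Type*} [DecidableEq X] {K : SimpleGraph X} {f : X → ℕ} {S : Finset X} {s₀ z w : X}

theorem IsRDF.update_zero (hf : IsRDF K f) (hz : f z ≠ 2) (hw : K.Adj z w) (hw2 : f w = 2) :
    IsRDF K (Function.update f z 0) := by
  have hupd : ∀ y, f y = 2 → Function.update f z 0 y = 2 := fun y hy =>
    (Function.update_of_ne (by rintro rfl; exact hz hy) _ _).trans hy
  refine ⟨fun y => ?_, fun y hy => ?_⟩
  · rw [Function.update_apply]
    split
    · omega
    · exact hf.1 y
  · by_cases hyz : y = z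
    · subst hyz
      exact ⟨w, hw, hupd w hw2⟩
    · rw [Function.update_of_ne hyz] at hy
      obtain ⟨v, hv, hv2⟩ := hf.2 y hy
      exact ⟨v, hv, hupd v hv2⟩

theorem IsRDF.piecewise_single (hf : IsRDF K f) (hs₀ : s₀ ∈ S)
    (hout : ∀ x ∉ S, ∀ y ∈ S, K.Adj x y → K.Adj x s₀)
    (hin : ∀ x ∈ S, x ≠ s₀ → ∃ y, K.Adj x y ∧ S.piecewise (Pi.single s₀ 2) f y = 2) :
    IsRDF K (S.piecewise (Pi.single s₀ 2) f) := by
  refine ⟨fun x => ?_, fun x hx => ?_⟩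
  · by_cases hxS : x ∈ S
    · rw [piecewise_eq_of_mem _ _ _ hxS, Pi.single_apply]
      split <;> omega
    · rw [piecewise_eq_of_notMem _ _ _ hxS]
      exact hf.1 x
  · by_cases hxS : x ∈ S
    · refine hin x hxS ?_
      rintro rfl
      simp [hs₀] at hx
    · rw [piecewise_eq_of_notMem _ _ _ hxS] at hx
      obtain ⟨y, hxy, hy⟩ := hf.2 x hx
      by_cases hyS : y ∈ S
      · exact ⟨s₀, hout x hxS y hyS hxy, by simp [hs₀]⟩
      · exact ⟨y, hxy, by rwa [piecewise_eq_of_notMem _ _ _ hyS]⟩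

variable {H : SimpleGraph X} {s w' : X}

theorem IsGRDF.update_zero (hf : IsGRDF H f) (hz : f z ≠ 2) (hw : H.Adj z w) (hw2 : f w = 2)
    (hw' : Hᶜ.Adj z w') (hw'2 : f w' = 2) : IsGRDF H (Function.update f z 0) :=
  ⟨hf.1.update_zero hz hw hw2, hf.2.update_zero hz hw' hw'2⟩

theorem IsGRDF.piecewise_single (hf : IsGRDF H f) (hS : IsFalseTwinSet H S) (hs₀ : s₀ ∈ S)
    (hs : s ∈ S) (hw : H.Adj s w) (hw2 : f w = 2) :
    IsGRDF H (S.piecewise (Pi.single s₀ 2) f) := by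
  have hwS : w ∉ S := fun h => hS.not_adj hs h hw
  refine ⟨hf.1.piecewise_single hs₀ ?_ ?_, hf.2.piecewise_single hs₀ ?_ ?_⟩
  · exact fun x _ y hy hxy => (hS.adj hy hs₀ hxy.symm).symm
  · exact fun x hx _ => ⟨w, hS.adj hs hx hw, by rwa [piecewise_eq_of_notMem _ _ _ hwS]⟩
  · exact fun x hx y hy hxy =>
      (hS.compl_adj_of_compl_adj hy hs₀ hxy.symm (fun h => hx (h ▸ hs₀))).symm
  · exact fun x hx hxs₀ => ⟨s₀, hS.compl_adj hx hs₀ hxs₀, by simp [hs₀]⟩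

variable [Fintype X]

theorem rdfWeight_update_zero_add (f : X → ℕ) (z : X) :
    rdfWeight (Function.update f z 0) + f z = rdfWeight f := by
  rw [rdfWeight, rdfWeight, sum_update_of_mem (mem_univ z),
    sum_eq_add_sum_sdiff_singleton_of_mem (mem_univ z) f]
  omega

theorem rdfWeight_piecewise_single_add (f : X → ℕ) (hs₀ : s₀ ∈ S) :
    rdfWeight (S.piecewise (Pi.single s₀ 2) f) + ∑ x ∈ S, f x = rdfWeight f + 2 := by
  rw [rdfWeight, rdfWeight, sum_piecewise, ← sum_inter_add_sum_sdiff univ S f, univ_inter,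
    sum_pi_single', if_pos hs₀]
  omega

end Relabelling

section Minimum

variable {X : Type*} [Fintype X] {H : SimpleGraph X} {f : X → ℕ} {S : Finset X} {s z w w' : X}

def IsMinGRDF (H : SimpleGraph X) (f : X → ℕ) : Prop :=
  IsGRDF H f ∧ ∀ g, IsGRDF H g → rdfWeight f ≤ rdfWeight g

theorem isMinGRDF_of_rdfWeight_eq (hf : IsGRDF H f) (hmin : rdfWeight f = globalRomanNumber H) :
    IsMinGRDF H f :=
  ⟨hf, fun g hg => hmin ▸ Nat.sInf_le ⟨g, hg, rfl⟩⟩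

theorem IsMinGRDF.exists_eq_two (hf : IsMinGRDF H f)
    (h : ∃ g, IsGRDF H g ∧ rdfWeight g < Fintype.card X) : ∃ x, f x = 2 := by
  by_contra! hno
  have hone : ∀ x, f x = 1 := fun x => by
    have hx0 : f x ≠ 0 := fun hx0 => by
      obtain ⟨y, -, hy⟩ := hf.1.1.2 x hx0
      exact hno y hy
    have := hf.1.1.1 x
    have := hno x
    omega
  obtain ⟨g, hg, hlt⟩ := h
  have hle := hf.2 g hg
  simp only [rdfWeight, hone, sum_const, card_univ, smul_eq_mul, mul_one] at hle hlt
  omega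

theorem IsMinGRDF.ne_one_of_adj_of_compl_adj (hf : IsMinGRDF H f) (hw : H.Adj z w)
    (hw2 : f w = 2) (hw' : Hᶜ.Adj z w') (hw'2 : f w' = 2) : f z ≠ 1 := by
  classical
  intro hz
  have hle := hf.2 _ (hf.1.update_zero (by omega) hw hw2 hw' hw'2)
  have := rdfWeight_update_zero_add f z
  omega

theorem IsMinGRDF.exists_eq_zero_of_isFalseTwinSet (hf : IsMinGRDF H f)
    (hS : IsFalseTwinSet H S) (hcard : 3 ≤ #S) (hs : s ∈ S) (hw : H.Adj s w) (hw2 : f w = 2) :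
    ∃ t ∈ S, f t = 0 := by
  classical
  by_contra! hpos
  have hsum : 3 ≤ ∑ x ∈ S, f x := calc
    3 ≤ #S := hcard
    _ = ∑ _x ∈ S, 1 := card_eq_sum_ones S
    _ ≤ ∑ x ∈ S, f x := sum_le_sum fun x hx => Nat.one_le_iff_ne_zero.2 (hpos x hx)
  have hle := hf.2 _ (hf.1.piecewise_single hS hs hs hw hw2)
  have := rdfWeight_piecewise_single_add f hs
  omega

theorem IsMinGRDF.ne_one_of_mem_isFalseTwinSet (hf : IsMinGRDF H f) (hS : IsFalseTwinSet H S)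
    (hcard : 3 ≤ #S) (hz : z ∈ S) (hw : H.Adj z w) (hw2 : f w = 2) : f z ≠ 1 := by
  intro hz1
  obtain ⟨s, hs, hs0⟩ := hf.exists_eq_zero_of_isFalseTwinSet hS hcard hz hw hw2
  obtain ⟨v, hv, hv2⟩ := hf.1.2.2 s hs0
  have hzv : Hᶜ.Adj z v := hS.compl_adj_of_compl_adj hs hz hv (by rintro rfl; omega)
  exact hf.ne_one_of_adj_of_compl_adj hw hw2 hzv hv2 hz1

end Minimum

namespace HGraph

variable {V : Type*} (G : SimpleGraph V)

theorem adj_inl_inr_s3 (a : V × Fin 3) (b : Fin 3) : (HGraph G).Adj (.inl a) (.inr b) := by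
  obtain ⟨u, i⟩ := a
  trivial

theorem not_compl_adj_inl_inr_s3 (a : V × Fin 3) (b : Fin 3) :
    ¬(HGraph G)ᶜ.Adj (.inl a) (.inr b) :=
  fun h => h.2 (adj_inl_inr_s3 G a b)

theorem not_compl_adj_inr_inl (b : Fin 3) (a : V × Fin 3) :
    ¬(HGraph G)ᶜ.Adj (.inr b) (.inl a) :=
  fun h => h.2 (adj_inl_inr_s3 G a b).symm

def copies (u : V) : Finset ((V × Fin 3) ⊕ Fin 3) :=
  univ.map ((Function.Embedding.sectR u (Fin 3)).trans Function.Embedding.inl)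

def apexes : Finset ((V × Fin 3) ⊕ Fin 3) :=
  univ.map Function.Embedding.inr

variable {G}

theorem mem_copies {u : V} {z : (V × Fin 3) ⊕ Fin 3} : z ∈ copies u ↔ ∃ i, .inl (u, i) = z := by
  simp [copies]

theorem mem_apexes {z : (V × Fin 3) ⊕ Fin 3} : z ∈ apexes ↔ ∃ i, .inr i = z := by
  simp [apexes]

theorem card_copies (u : V) : #(copies u) = 3 := by
  simp [copies]

theorem card_apexes : #(apexes : Finset ((V × Fin 3) ⊕ Fin 3)) = 3 := by
  simp [apexes]

variable (G)

theorem isFalseTwinSet_copies (u : V) : IsFalseTwinSet (HGraph G) (copies u) := by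
  simp only [IsFalseTwinSet, mem_copies]
  rintro _ ⟨i, rfl⟩ _ ⟨j, rfl⟩
  ext (⟨w, k⟩ | b) <;> rfl

theorem isFalseTwinSet_apexes : IsFalseTwinSet (HGraph G) apexes := by
  simp only [IsFalseTwinSet, mem_apexes]
  rintro _ ⟨i, rfl⟩ _ ⟨j, rfl⟩
  ext (⟨w, k⟩ | b) <;> rfl

def indexZeroGRDF : (V × Fin 3) ⊕ Fin 3 → ℕ :=
  Sum.elim (fun a => if a.2 = 0 then 2 else 0) (fun b => if b = 0 then 2 else 0)

theorem isGRDF_indexZeroGRDF [Nonempty V] : IsGRDF (HGraph G) indexZeroGRDF := by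
  obtain ⟨u⟩ := ‹Nonempty V›
  have hle : ∀ z : (V × Fin 3) ⊕ Fin 3, indexZeroGRDF z ≤ 2 := by
    rintro (⟨w, i⟩ | b) <;>
      simp only [indexZeroGRDF, Sum.elim_inl, Sum.elim_inr] <;> split <;> omega
  refine ⟨⟨hle, ?_⟩, ⟨hle, ?_⟩⟩
  · rintro (a | b) -
    · exact ⟨.inr 0, adj_inl_inr_s3 G a 0, rfl⟩
    · exact ⟨.inl (u, 0), (adj_inl_inr_s3 G _ b).symm, rfl⟩
  · rintro (⟨w, i⟩ | b) h0
    · refine ⟨.inl (w, 0), (isFalseTwinSet_copies G w).compl_adj (mem_copies.2 ⟨i, rfl⟩)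
        (mem_copies.2 ⟨0, rfl⟩) ?_, rfl⟩
      rintro ⟨⟩
      simp [indexZeroGRDF] at h0
    · refine ⟨.inr 0, (isFalseTwinSet_apexes G).compl_adj (mem_apexes.2 ⟨b, rfl⟩)
        (mem_apexes.2 ⟨0, rfl⟩) ?_, rfl⟩
      rintro ⟨⟩
      simp [indexZeroGRDF] at h0

variable [Fintype V]

theorem rdfWeight_indexZeroGRDF : rdfWeight (indexZeroGRDF (V := V)) = 2 * Fintype.card V + 2 := by
  simp [rdfWeight, indexZeroGRDF, Fintype.sum_sum_type, Fintype.sum_prod_type, mul_comm]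

variable {G} {f : (V × Fin 3) ⊕ Fin 3 → ℕ}

theorem exists_isGRDF_rdfWeight_lt_card [Nonempty V] :
    ∃ g, IsGRDF (HGraph G) g ∧ rdfWeight g < Fintype.card ((V × Fin 3) ⊕ Fin 3) := by
  refine ⟨indexZeroGRDF, isGRDF_indexZeroGRDF G, ?_⟩
  rw [rdfWeight_indexZeroGRDF, Fintype.card_sum, Fintype.card_prod, Fintype.card_fin]
  omega

theorem exists_apex_eq_two (hf : IsMinGRDF (HGraph G) f) {a : V × Fin 3} (ha : f (.inl a) = 2) :
    ∃ b, f (.inr b) = 2 := by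
  by_contra! hno
  obtain ⟨_, hz, hz0⟩ := hf.exists_eq_zero_of_isFalseTwinSet (isFalseTwinSet_apexes G)
    card_apexes.ge (mem_apexes.2 ⟨0, rfl⟩) (adj_inl_inr_s3 G a 0).symm ha
  obtain ⟨b, rfl⟩ := mem_apexes.1 hz
  obtain ⟨_ | b', hadj, h2⟩ := hf.1.2.2 _ hz0
  · exact not_compl_adj_inr_inl G _ _ hadj
  · exact hno b' h2

theorem exists_copy_eq_two [Nonempty V] (hf : IsMinGRDF (HGraph G) f) {b : Fin 3}
    (hb : f (.inr b) = 2) : ∃ a, f (.inl a) = 2 := by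
  by_contra! hno
  obtain ⟨u⟩ := ‹Nonempty V›
  obtain ⟨_, hz, hz0⟩ := hf.exists_eq_zero_of_isFalseTwinSet (isFalseTwinSet_copies G u)
    (card_copies u).ge (mem_copies.2 ⟨0, rfl⟩) (adj_inl_inr_s3 G (u, 0) b) hb
  obtain ⟨i, rfl⟩ := mem_copies.1 hz
  obtain ⟨a | _, hadj, h2⟩ := hf.1.2.2 _ hz0
  · exact hno a h2
  · exact not_compl_adj_inl_inr_s3 G _ _ hadj

theorem exists_copy_eq_two_and_exists_apex_eq_two [Nonempty V] (hf : IsMinGRDF (HGraph G) f) :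
    (∃ a, f (.inl a) = 2) ∧ ∃ b, f (.inr b) = 2 := by
  obtain ⟨a | b, h2⟩ := hf.exists_eq_two exists_isGRDF_rdfWeight_lt_card
  · exact ⟨⟨a, h2⟩, exists_apex_eq_two hf h2⟩
  · exact ⟨exists_copy_eq_two hf h2, ⟨b, h2⟩⟩

end HGraph

theorem HGraph_min_GRDF_labels_zero_or_two_general {V : Type*} [Fintype V] [Nonempty V]
    (G : SimpleGraph V)
    (f : ((V × Fin 3) ⊕ Fin 3) → ℕ)
    (hf : IsGRDF (HGraph G) f)
    (hmin : rdfWeight f = globalRomanNumber (HGraph G)) :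
    ∀ z : (V × Fin 3) ⊕ Fin 3, f z = 0 ∨ f z = 2 := by
  have hfmin := isMinGRDF_of_rdfWeight_eq hf hmin
  obtain ⟨⟨a, ha⟩, ⟨b, hb⟩⟩ := HGraph.exists_copy_eq_two_and_exists_apex_eq_two hfmin
  intro z
  have hz1 : f z ≠ 1 := by
    rcases z with ⟨u, i⟩ | i
    · exact hfmin.ne_one_of_mem_isFalseTwinSet (HGraph.isFalseTwinSet_copies G u)
        (HGraph.card_copies u).ge (HGraph.mem_copies.2 ⟨i, rfl⟩) (HGraph.adj_inl_inr_s3 G _ b) hb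
    · exact hfmin.ne_one_of_mem_isFalseTwinSet (HGraph.isFalseTwinSet_apexes G)
        HGraph.card_apexes.ge (HGraph.mem_apexes.2 ⟨i, rfl⟩) (HGraph.adj_inl_inr_s3 G a i).symm ha
  have := hf.1.1 z
  omega

/-- if `f` is a minimum weighted global Roman dominating function of `H`,
then every vertex of `H` receives a label from `{0, 2}`. -/
theorem HGraph_min_GRDF_labels_zero_or_two {V : Type*} [Fintype V] [DecidableEq V] [Nonempty V]
    (G : SimpleGraph V) [DecidableRel G.Adj]
    (hreg : ∀ v : V, G.degree v = 3)
    (f : ((V × Fin 3) ⊕ Fin 3) → ℕ)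
    (hf : IsGRDF (HGraph G) f)
    (hmin : rdfWeight f = globalRomanNumber (HGraph G)) :
    ∀ z : (V × Fin 3) ⊕ Fin 3, f z = 0 ∨ f z = 2 :=
  HGraph_min_GRDF_labels_zero_or_two_general G f hf hmin
end

section
/- Let H be the graph constructed from an Exact 4-Cover instance as described. For every Roman dominating function f of H, the weight of f on P ∪ Q ∪ S is at least 8l. -/
/-- The vertices of the graph built from an Exact 4-Cover instance with ground set
`X = Fin (4*l)` (element `x_{i+1}` is `i : Fin (4*l)`) and collection `C : Fin m → _`.
Indices are 0-based: `q i 0` is `q_{i+1}^1`, `q i 1` is `q_{i+1}^2`, `s i t` is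
`s_{i+1}^{t+1}`, and `r k` (for `k : Fin (2*l)`) is the vertex `r_{2k+1}` of the paper
(one vertex for each odd index in `[4l]`, i.e. each even 0-based index `2k`). -/
inductive XVtx (l m : ℕ) : Type
  | a : Fin m → XVtx l m
  | b : Fin (4 * l) → XVtx l m
  | u : XVtx l m
  | v : XVtx l m
  | w : XVtx l m
  | x : XVtx l m
  | p : Fin (4 * l) → XVtx l m
  | q : Fin (4 * l) → Fin 2 → XVtx l m
  | r : Fin (2 * l) → XVtx l m
  | s : Fin (4 * l) → Fin 3 → XVtx l m
  deriving DecidableEq, Fintype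

/-- Base (one-sided) adjacency for the graph built from an Exact 4-Cover instance:
`A` is a clique; `b i ~ a j` iff `x_i ∈ C_j`; `v,w,x` adjacent to all of `A`;
`u ~ v,w,x`; `b i ~ p i`; `p i ~ q i^1, q i^2`; each `s i^t` adjacent to
`p i, q i^1, q i^2`; `r_{2k+1} ~ q_{2k+1}^1, q_{2k+1}^2`; `q_i^2 ~ q_{i+1}^1`
cyclically; and `v, x` adjacent to all of `P ∪ Q`. -/
def xBase {l m : ℕ} (C : Fin m → Finset (Fin (4 * l))) :
    XVtx l m → XVtx l m → Prop
  | .a _, .a _ => True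
  | .b i, .a j => i ∈ C j
  | .v, .a _ => True
  | .w, .a _ => True
  | .x, .a _ => True
  | .u, .v => True
  | .u, .w => True
  | .u, .x => True
  | .b i, .p i' => i = i'
  | .p i, .q i' _ => i = i'
  | .s i _, .p i' => i = i'
  | .s i _, .q i' _ => i = i'
  | .r k, .q i _ => (i : ℕ) = 2 * (k : ℕ)
  | .q i t, .q i' t' => t = 1 ∧ t' = 0 ∧ (i' : ℕ) = ((i : ℕ) + 1) % (4 * l)
  | .v, .p _ => True
  | .v, .q _ _ => True
  | .x, .p _ => True
  | .x, .q _ _ => True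
  | _, _ => False

/-- The graph `H` built from an Exact 4-Cover instance. -/
def XGraph {l m : ℕ} (C : Fin m → Finset (Fin (4 * l))) : SimpleGraph (XVtx l m) where
  Adj a b := a ≠ b ∧ (xBase C a b ∨ xBase C b a)
  symm := ⟨fun _ _ h => ⟨h.1.symm, h.2.symm⟩⟩
  loopless := ⟨fun _ h => h.1 rfl⟩

/-!
Each vertex `s_i^t` has all its neighbours among `p_i, q_i^1, q_i^2`. So if `s_i^1` or `s_i^2`
is labelled `0`, one of `p_i, q_i^1, q_i^2` is labelled `2`; otherwise `s_i^1` and `s_i^2`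
carry weight `2` between them. Either way the six vertices indexed by `i` carry weight at
least `2`, and summing over the `4l` indices gives `8l`.
-/

namespace IsRDF

variable {V : Type*} {G : SimpleGraph V} {f : V → ℕ}

theorem two_le_sum_of_adj_subset (hf : IsRDF G f) {s : V} {N : Finset V} (hs : f s = 0)
    (hN : ∀ ⦃y⦄, G.Adj s y → y ∈ N) : 2 ≤ ∑ n ∈ N, f n := by
  obtain ⟨y, hsy, hy⟩ := hf.2 s hs
  exact hy ▸ Finset.single_le_sum (fun _ _ => Nat.zero_le _) (hN hsy)

theorem two_le_add_add_sum_of_adj_subset (hf : IsRDF G f) {s s' : V} {N : Finset V}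
    (hs : ∀ ⦃y⦄, G.Adj s y → y ∈ N) (hs' : ∀ ⦃y⦄, G.Adj s' y → y ∈ N) :
    2 ≤ f s + f s' + ∑ n ∈ N, f n := by
  by_cases h0 : f s = 0
  · linarith [hf.two_le_sum_of_adj_subset h0 hs]
  by_cases h0' : f s' = 0
  · linarith [hf.two_le_sum_of_adj_subset h0' hs']
  omega

end IsRDF

theorem XGraph.mem_of_s_adj {l m : ℕ} {C : Fin m → Finset (Fin (4 * l))} {i : Fin (4 * l)}
    {t : Fin 3} {y : XVtx l m} (h : (XGraph C).Adj (.s i t) y) :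
    y ∈ ({.p i, .q i 0, .q i 1} : Finset (XVtx l m)) := by
  obtain ⟨-, h⟩ := h
  cases y with
  | p i' => simp_all [xBase]
  | q i' t' => fin_cases t' <;> simp_all [xBase]
  | _ => simp [xBase] at h

theorem XGraph.two_le_weight_p_q_s {l m : ℕ} (C : Fin m → Finset (Fin (4 * l)))
    {f : XVtx l m → ℕ} (hf : IsRDF (XGraph C) f) (i : Fin (4 * l)) :
    2 ≤ f (.p i) + ∑ t, f (.q i t) + ∑ t, f (.s i t) := by
  have h := hf.two_le_add_add_sum_of_adj_subset (s := .s i 0) (s' := .s i 1)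
    (fun _ => XGraph.mem_of_s_adj) (fun _ => XGraph.mem_of_s_adj)
  simp only [Fin.sum_univ_two, Fin.sum_univ_three]
  rw [Finset.sum_insert (by simp), Finset.sum_pair (by simp)] at h
  omega

theorem XGraph_RDF_weight_PQS_ge_general {l m : ℕ} (C : Fin m → Finset (Fin (4 * l)))
    (f : XVtx l m → ℕ) (hf : IsRDF (XGraph C) f) :
    8 * l ≤ (∑ i, f (XVtx.p i)) + (∑ i, ∑ t, f (XVtx.q i t)) +
      (∑ i, ∑ t, f (XVtx.s i t)) := by
  calc 8 * l = ∑ _i : Fin (4 * l), 2 := by simp; ring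
    _ ≤ ∑ i, (f (.p i) + ∑ t, f (.q i t) + ∑ t, f (.s i t)) :=
      Finset.sum_le_sum fun i _ => XGraph.two_le_weight_p_q_s C hf i
    _ = _ := by simp only [Finset.sum_add_distrib]

/-- for every Roman dominating function `f` of `H`, the weight of `f` on
`P ∪ Q ∪ S` is at least `8l`. -/
theorem XGraph_RDF_weight_PQS_ge {l m : ℕ} (C : Fin m → Finset (Fin (4 * l)))
    (hC : ∀ j, (C j).card = 4)
    (f : XVtx l m → ℕ) (hf : IsRDF (XGraph C) f) :
    8 * l ≤ (∑ i, f (XVtx.p i)) + (∑ i, ∑ t, f (XVtx.q i t)) +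
      (∑ i, ∑ t, f (XVtx.s i t)) :=
  XGraph_RDF_weight_PQS_ge_general C f hf
end

section
/- Let H be the graph constructed from an Exact 4-Cover instance as described. For every Roman dominating function f of H, the weight of f on A ∪ B ∪ P is at least 2l. -/
open Finset

theorem Finset.mul_card_filter_le_sum {ι : Type*} (s : Finset ι) (f : ι → ℕ) (k : ℕ) :
    k * #{i ∈ s | k ≤ f i} ≤ ∑ i ∈ s, f i :=
  calc k * #{i ∈ s | k ≤ f i} = #{i ∈ s | k ≤ f i} • k := by rw [smul_eq_mul, mul_comm]
    _ ≤ ∑ i ∈ s with k ≤ f i, f i := card_nsmul_le_sum _ _ _ fun _ hi => (mem_filter.1 hi).2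
    _ ≤ ∑ i ∈ s, f i := sum_le_sum_of_subset (filter_subset _ _)

theorem XGraph.eq_p_or_eq_a_of_adj_b {l m : ℕ} {C : Fin m → Finset (Fin (4 * l))}
    {i : Fin (4 * l)} {y : XVtx l m} (h : (XGraph C).Adj (XVtx.b i) y) :
    y = XVtx.p i ∨ ∃ j, y = XVtx.a j ∧ i ∈ C j := by
  obtain ⟨-, h | h⟩ := h <;> cases y <;> simp_all [xBase]

theorem IsRDF.XGraph_b_dominated {l m : ℕ} {C : Fin m → Finset (Fin (4 * l))}
    {f : XVtx l m → ℕ} (hf : IsRDF (XGraph C) f) (i : Fin (4 * l)) :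
    1 ≤ f (XVtx.b i) ∨ 2 ≤ f (XVtx.p i) ∨ ∃ j, 2 ≤ f (XVtx.a j) ∧ i ∈ C j := by
  rcases Nat.eq_zero_or_pos (f (XVtx.b i)) with hb | hb
  · obtain ⟨y, hadj, hy⟩ := hf.2 _ hb
    rcases XGraph.eq_p_or_eq_a_of_adj_b hadj with rfl | ⟨j, rfl, hij⟩
    · exact .inr (.inl hy.ge)
    · exact .inr (.inr ⟨j, hy.ge, hij⟩)
  · exact .inl hb

/-- for every Roman dominating function `f` of `H`, the weight of `f` on
`A ∪ B ∪ P` is at least `2l`. -/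
theorem XGraph_RDF_weight_ABP_ge {l m : ℕ} (C : Fin m → Finset (Fin (4 * l)))
    (hC : ∀ j, (C j).card = 4)
    (f : XVtx l m → ℕ) (hf : IsRDF (XGraph C) f) :
    2 * l ≤ (∑ j, f (XVtx.a j)) + (∑ i, f (XVtx.b i)) + (∑ i, f (XVtx.p i)) := by
  set J : Finset (Fin m) := {j | 2 ≤ f (XVtx.a j)}
  set IB : Finset (Fin (4 * l)) := {i | 1 ≤ f (XVtx.b i)}
  set IP : Finset (Fin (4 * l)) := {i | 2 ≤ f (XVtx.p i)}
  have hcover : univ ⊆ IB ∪ IP ∪ J.biUnion C := by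
    intro i _
    simpa [IB, IP, J, or_assoc] using hf.XGraph_b_dominated i
  have hJ : #(J.biUnion C) ≤ #J * 4 := card_biUnion_le_card_mul _ _ _ fun j _ => (hC j).le
  have hA : 2 * #J ≤ ∑ j, f (XVtx.a j) := mul_card_filter_le_sum _ _ _
  have hB : 1 * #IB ≤ ∑ i, f (XVtx.b i) := mul_card_filter_le_sum _ _ _
  have hP : 2 * #IP ≤ ∑ i, f (XVtx.p i) := mul_card_filter_le_sum _ _ _
  have hcard : 4 * l ≤ #IB + #IP + #(J.biUnion C) := calc
    4 * l = #(univ : Finset (Fin (4 * l))) := by simp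
    _ ≤ #(IB ∪ IP ∪ J.biUnion C) := card_le_card hcover
    _ ≤ #(IB ∪ IP) + #(J.biUnion C) := card_union_le _ _
    _ ≤ #IB + #IP + #(J.biUnion C) := by grw [card_union_le]
  omega
end
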